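/- arXiv:2101.11584 — 2 statements merged into one kernel-verified Lean document; each statement's English description precedes it below -/
import Mathlib

section
/- Let A be a unital C*-algebra equipped with a Lipschitz filtration {A_L}_{L≥0}. If u, v ∈ U^L_n(A) satisfy ‖u − v‖ ≤ 1/6, then there exists a norm-continuous map h : [0,1] → U^{3L}_n(A) with h(0) = 1, h(1) = vu*, and ‖h(t) − h(s)‖ ≤ |t − s| for all t, s ∈ [0,1]; consequently t ↦ h(t)u is a 1-Lipschitz path of unitaries in U^{4L}_n(A) connecting u and v. -/
open scoped NNReal

/-- Membership in the matrix level `M_n(A)_L` determined by a filtration `lev` of `A`: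
`x ∈ M_n(A)_L` iff `ξᵀ x η ∈ A_L` for all vectors `ξ, η ∈ ℂⁿ` of ℓ²-norm at most `1`. -/
def MatMem {A : Type*} [CStarAlgebra A] (lev : ℝ≥0 → Set A) {n : ℕ}
    (x : Matrix (Fin n) (Fin n) A) (L : ℝ≥0) : Prop :=
  ∀ ξ η : Fin n → ℂ, (∑ i, ‖ξ i‖ ^ 2) ≤ 1 → (∑ j, ‖η j‖ ^ 2) ≤ 1 →
    (∑ i, ∑ j, (ξ i * η j) • x i j) ∈ lev L

/-- A Lipschitz filtration `{A_L}_{L ≥ 0}` on a unital C*-algebra `A`, in the sense of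
conditions (L1)–(L6).  The C*-algebras of matrices `M_n(A)` are represented by C*-algebras
`B n` together with ⋆-algebra isomorphisms `φ n : B n ≃⋆ₐ[ℂ] Matrix (Fin n) (Fin n) A`
(recall that the C*-norm on `M_n(A)` is unique), and the matrix levels `M_n(A)_L` are the sets
`{b : B n | MatMem level (φ n b) L}`. -/
structure LipschitzFiltration (A : Type*) [CStarAlgebra A] (B : ℕ → Type*)
    [∀ n, CStarAlgebra (B n)] (φ : ∀ n, B n ≃⋆ₐ[ℂ] Matrix (Fin n) (Fin n) A) where
  level : ℝ≥0 → Set A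
  mono : ∀ ⦃L L' : ℝ≥0⦄, L ≤ L' → level L ⊆ level L'
  dense_union : Dense (⋃ L : ℝ≥0, level L)
  -- (L1)
  closed : ∀ L, IsClosed (level L)
  star_mem : ∀ (L : ℝ≥0) (a : A), a ∈ level L → star a ∈ level L
  scalar_mem : ∀ (L : ℝ≥0) (c : ℂ), c • (1 : A) ∈ level L
  -- (L2)
  smul_mem : ∀ (L : ℝ≥0) (c : ℂ) (a : A), a ∈ level L → c • a ∈ level (‖c‖₊ * L)
  -- (L3)
  add_mem : ∀ (L₁ L₂ : ℝ≥0) (a₁ a₂ : A), a₁ ∈ level L₁ → a₂ ∈ level L₂ →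
    a₁ + a₂ ∈ level (L₁ + L₂)
  -- (L4)
  mul_mem : ∀ (L₁ L₂ : ℝ≥0) (a₁ a₂ : A), a₁ ∈ level L₁ → a₂ ∈ level L₂ →
    a₁ * a₂ ∈ level (‖a₁‖₊ * L₂ + ‖a₂‖₊ * L₁)
  -- (L5): the matrix levels satisfy (L1)–(L4) in `M_n(A)` and contain all scalar matrices
  mat_closed : ∀ (n : ℕ) (L : ℝ≥0), IsClosed {b : B n | MatMem level (φ n b) L}
  mat_star : ∀ (n : ℕ) (L : ℝ≥0) (b : B n),
    MatMem level (φ n b) L → MatMem level (φ n (star b)) L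
  mat_scalar : ∀ (n : ℕ) (L : ℝ≥0) (c : Matrix (Fin n) (Fin n) ℂ),
    MatMem level (c.map (fun z : ℂ => z • (1 : A))) L
  mat_smul : ∀ (n : ℕ) (L : ℝ≥0) (c : ℂ) (b : B n),
    MatMem level (φ n b) L → MatMem level (φ n (c • b)) (‖c‖₊ * L)
  mat_add : ∀ (n : ℕ) (L₁ L₂ : ℝ≥0) (b₁ b₂ : B n),
    MatMem level (φ n b₁) L₁ → MatMem level (φ n b₂) L₂ →
      MatMem level (φ n (b₁ + b₂)) (L₁ + L₂)
  mat_mul : ∀ (n : ℕ) (L₁ L₂ : ℝ≥0) (b₁ b₂ : B n),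
    MatMem level (φ n b₁) L₁ → MatMem level (φ n b₂) L₂ →
      MatMem level (φ n (b₁ * b₂)) (‖b₁‖₊ * L₂ + ‖b₂‖₊ * L₁)
  -- (L6)
  mat_inv : ∀ (n : ℕ) (L : ℝ≥0) (b : B n) (c : ℂ)
    (h : IsUnit (b - algebraMap ℂ (B n) c)),
    MatMem level (φ n b) L →
      MatMem level (φ n ((↑h.unit⁻¹ : B n))) (‖(↑h.unit⁻¹ : B n)‖₊ ^ 2 * L)

variable {A : Type*} [CStarAlgebra A] {B : ℕ → Type*} [∀ n, CStarAlgebra (B n)]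

/-- `p ∈ P^L_n(A)`: `p` is a projection in `M_n(A)_L`. -/
def PMem (φ : ∀ n, B n ≃⋆ₐ[ℂ] Matrix (Fin n) (Fin n) A)
    (𝓕 : LipschitzFiltration A B φ) {n : ℕ} (L : ℝ≥0) (p : B n) : Prop :=
  MatMem 𝓕.level (φ n p) L ∧ IsSelfAdjoint p ∧ IsIdempotentElem p

/-- `u ∈ U^L_n(A)`: `u` is a unitary in `M_n(A)_L`. -/
def UMem (φ : ∀ n, B n ≃⋆ₐ[ℂ] Matrix (Fin n) (Fin n) A)
    (𝓕 : LipschitzFiltration A B φ) {n : ℕ} (L : ℝ≥0) (u : B n) : Prop :=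
  MatMem 𝓕.level (φ n u) L ∧ u ∈ unitary (B n)

/-- Block-diagonal direct sum `x ⊕ y ∈ M_{n+m}(A)`. -/
def oplus (φ : ∀ n, B n ≃⋆ₐ[ℂ] Matrix (Fin n) (Fin n) A)
    {n m : ℕ} (x : B n) (y : B m) : B (n + m) :=
  (φ (n + m)).symm
    (Matrix.reindex finSumFinEquiv finSumFinEquiv (Matrix.fromBlocks (φ n x) 0 0 (φ m y)))

/-!
The path is the Cayley transform of a segment. Since `W = v u*` is a unitary with
`‖W - 1‖ ≤ 1/6`, `W + 1` is invertible with `‖(W + 1)⁻¹‖ ≤ 6/11`, and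
`y = (W - 1)(W + 1)⁻¹` is skew-adjoint with `‖y‖ ≤ 1/11`. Then `h t = (1 + t y)(1 - t y)⁻¹` is a
unitary for every `t ∈ [0, 1]`, with `h 0 = 1` and `h 1 = W`, and the identity
`c(a) - c(b) = 2 (1 - a)⁻¹ (a - b) (1 - b)⁻¹` for `c(a) = (1 + a)(1 - a)⁻¹` makes `h` Lipschitz
with constant `2 (11/10)² / 11 < 1`. Only products and inverses occur, so (L4) and (L6), with the
norms of the factors controlled by `‖t y‖ ≤ 1/11`, keep `h t` in `M_n(A)_{3L}`.
-/

open scoped Ring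

section Cayley

variable {R : Type*} [Ring R]

noncomputable def cayley (a : R) : R := (1 + a) * (1 - a)⁻¹ʳ

noncomputable def invCayley (w : R) : R := (w - 1) * (w + 1)⁻¹ʳ

@[simp]
lemma cayley_zero : cayley (0 : R) = 1 := by
  simp [cayley]

lemma cayley_eq_two_nsmul_ringInverse_sub_one {a : R} (ha : IsUnit (1 - a)) :
    cayley a = 2 • (1 - a)⁻¹ʳ - 1 := by
  rw [cayley, show 1 + a = 2 • (1 : R) - (1 - a) by noncomm_ring, sub_mul, smul_mul_assoc,
    one_mul, Ring.mul_inverse_cancel _ ha]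

lemma cayley_sub_cayley {a b : R} (ha : IsUnit (1 - a)) (hb : IsUnit (1 - b)) :
    cayley a - cayley b = 2 • ((1 - a)⁻¹ʳ * (a - b) * (1 - b)⁻¹ʳ) := by
  rw [cayley_eq_two_nsmul_ringInverse_sub_one ha, cayley_eq_two_nsmul_ringInverse_sub_one hb,
    sub_sub_sub_cancel_right, ← smul_sub, Ring.inverse_sub_inverse (iff_of_true ha hb),
    sub_sub_sub_cancel_left]

lemma cayley_eq_of_one_add_eq_mul {a w : R} (ha : IsUnit (1 - a)) (h : 1 + a = w * (1 - a)) :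
    cayley a = w := by
  rw [cayley, h, Ring.mul_inverse_cancel_right _ _ ha]

lemma cayley_invCayley {w : R} (hw : IsUnit (w + 1)) (h : IsUnit (1 - invCayley w)) :
    cayley (invCayley w) = w := by
  refine cayley_eq_of_one_add_eq_mul h ?_
  have hk : (w + 1) * (w + 1)⁻¹ʳ = 1 := Ring.mul_inverse_cancel _ hw
  calc 1 + invCayley w = (w + 1) * (w + 1)⁻¹ʳ + (w - 1) * (w + 1)⁻¹ʳ := by rw [hk, invCayley]
    _ = w * ((w + 1) * (w + 1)⁻¹ʳ - (w - 1) * (w + 1)⁻¹ʳ) := by noncomm_ring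
    _ = w * (1 - invCayley w) := by rw [hk, invCayley]

variable [StarRing R]

lemma cayley_mem_unitary {a : R} (hskew : star a = -a) (ha : IsUnit (1 - a)) :
    cayley a ∈ unitary R := by
  have hstar : star (1 - a) = 1 + a := by rw [star_sub, star_one, hskew, sub_neg_eq_add]
  set q := (1 - a)⁻¹ʳ
  set p := (1 + a)⁻¹ʳ
  have hqp : star q = p := by rw [← Ring.inverse_star, hstar]
  have hcomm : q * p = p * q :=
    (Commute.ringInverse_ringInverse (show (1 - a) * (1 + a) = (1 + a) * (1 - a) by
      noncomm_ring)).eq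
  have hsum : p + q = 2 • (p * q) := by
    rw [Ring.inverse_add_inverse (by rw [← hstar, isUnit_star]), add_add_sub_cancel, mul_add,
      mul_one, add_mul, two_nsmul]
  have hc : star (cayley a) = 2 • p - 1 := by
    rw [cayley_eq_two_nsmul_ringInverse_sub_one ha, star_sub, star_nsmul, star_one, hqp]
  rw [Unitary.mem_iff, hc, cayley_eq_two_nsmul_ringInverse_sub_one ha]
  constructor
  · calc (2 • p - 1) * (2 • q - 1) = 2 • (2 • (p * q) - (p + q)) + 1 := by noncomm_ring
      _ = 1 := by rw [hsum, sub_self, smul_zero, zero_add]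
  · calc (2 • q - 1) * (2 • p - 1) = 2 • (2 • (q * p) - (p + q)) + 1 := by noncomm_ring
      _ = 1 := by rw [hcomm, hsum, sub_self, smul_zero, zero_add]

lemma star_invCayley {w : R} (hw : w ∈ unitary R) (hw1 : IsUnit (w + 1)) :
    star (invCayley w) = -invCayley w := by
  set k := (w + 1)⁻¹ʳ
  have hk : k * (w + 1) = 1 := Ring.inverse_mul_cancel _ hw1
  have hk' : (w + 1) * k = 1 := Ring.mul_inverse_cancel _ hw1
  have hstar_inv : (star w)⁻¹ʳ = w :=
    Ring.inverse_unit ⟨star w, w, Unitary.star_mul_self_of_mem hw, Unitary.mul_star_self_of_mem hw⟩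
  have hstar_add : star (w + 1) = star w * (w + 1) := by
    rw [star_add, star_one, mul_add, Unitary.star_mul_self_of_mem hw, mul_one, add_comm]
  have hstar_k : star k = k * w := by
    rw [← Ring.inverse_star, hstar_add, Ring.inverse_mul (Or.inr hw1), hstar_inv]
  have hy : invCayley w = 1 - 2 • k := by
    calc invCayley w = (w + 1) * k - 2 • k := by rw [invCayley]; noncomm_ring
      _ = 1 - 2 • k := by rw [hk']
  rw [hy, star_sub, star_one, star_nsmul, hstar_k]
  calc 1 - 2 • (k * w) = 2 • k * (w + 1) - 2 • (k * w) - 1 := by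
        rw [smul_mul_assoc, hk]; noncomm_ring
    _ = -(1 - 2 • k) := by noncomm_ring

end Cayley

section Norm

variable {E : Type*} [CStarAlgebra E]

lemma CStarRing.norm_one_le : ‖(1 : E)‖ ≤ 1 := by
  rcases subsingleton_or_nontrivial E with _ | _
  · simp [Subsingleton.elim (1 : E) 0]
  · exact CStarRing.norm_one.le

lemma norm_le_one_of_mem_unitary {w : E} (hw : w ∈ unitary E) : ‖w‖ ≤ 1 := by
  have h := CStarRing.norm_mem_unitary_mul (1 : E) hw
  rw [mul_one] at h
  exact h ▸ CStarRing.norm_one_le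

lemma isUnit_algebraMap_sub_of_norm_lt {c : ℂ} {a : E} (h : ‖a‖ < ‖c‖) :
    IsUnit (algebraMap ℂ E c - a) := by
  refine spectrum.notMem_iff.mp fun hc => ?_
  have hc' := spectrum.subset_closedBall_norm_mul (𝕜 := ℂ) a hc
  rw [Metric.mem_closedBall, dist_zero_right] at hc'
  nlinarith [CStarRing.norm_one_le (E := E), norm_nonneg a]

lemma norm_ringInverse_algebraMap_sub_le {c : ℂ} {a : E} (h : ‖a‖ < ‖c‖) :
    ‖(algebraMap ℂ E c - a)⁻¹ʳ‖ ≤ (‖c‖ - ‖a‖)⁻¹ := by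
  set k := (algebraMap ℂ E c - a)⁻¹ʳ
  have hk : k * (algebraMap ℂ E c - a) = 1 :=
    Ring.inverse_mul_cancel _ (isUnit_algebraMap_sub_of_norm_lt h)
  have hck : c • k = 1 + k * a := by
    rw [← hk, mul_sub, Algebra.algebraMap_eq_smul_one, mul_smul_one]; abel
  have hbound : ‖c‖ * ‖k‖ ≤ 1 + ‖k‖ * ‖a‖ := by
    calc ‖c‖ * ‖k‖ = ‖1 + k * a‖ := by rw [← hck, norm_smul]
      _ ≤ ‖(1 : E)‖ + ‖k‖ * ‖a‖ := (norm_add_le _ _).trans (by gcongr; exact norm_mul_le _ _)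
      _ ≤ 1 + ‖k‖ * ‖a‖ := by gcongr; exact CStarRing.norm_one_le
  rw [← one_div, le_div_iff₀ (sub_pos.mpr h)]
  linarith

lemma isUnit_one_sub_of_norm_le {a : E} {r : ℝ} (ha : ‖a‖ ≤ r) (hr : r < 1) :
    IsUnit (1 - a) :=
  isUnit_one_sub_of_norm_lt_one (ha.trans_lt hr)

lemma norm_ringInverse_one_sub_le {a : E} {r : ℝ} (ha : ‖a‖ ≤ r) (hr : r < 1) :
    ‖(1 - a)⁻¹ʳ‖ ≤ (1 - r)⁻¹ := by
  have h := norm_ringInverse_algebraMap_sub_le (c := 1) (a := a) (by simpa using ha.trans_lt hr)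
  rw [map_one, norm_one] at h
  exact h.trans (inv_anti₀ (by linarith) (by linarith))

lemma add_one_eq_algebraMap_two_sub (w : E) : w + 1 = algebraMap ℂ E 2 - (1 - w) := by
  rw [map_ofNat, ← one_add_one_eq_two]; abel

lemma isUnit_add_one_of_norm_sub_one_le {w : E} {r : ℝ} (hw : ‖w - 1‖ ≤ r) (hr : r < 2) :
    IsUnit (w + 1) := by
  rw [add_one_eq_algebraMap_two_sub]
  exact isUnit_algebraMap_sub_of_norm_lt (by rw [norm_sub_rev]; simpa using hw.trans_lt hr)

lemma norm_ringInverse_add_one_le {w : E} {r : ℝ} (hw : ‖w - 1‖ ≤ r) (hr : r < 2) :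
    ‖(w + 1)⁻¹ʳ‖ ≤ (2 - r)⁻¹ := by
  rw [norm_sub_rev] at hw
  have h := norm_ringInverse_algebraMap_sub_le (c := 2) (a := 1 - w) (by simpa using hw.trans_lt hr)
  rw [← add_one_eq_algebraMap_two_sub, Complex.norm_ofNat] at h
  exact h.trans (inv_anti₀ (by linarith) (by linarith))

lemma norm_invCayley_le {w : E} {r : ℝ} (hw : ‖w - 1‖ ≤ r) (hr : r < 2) :
    ‖invCayley w‖ ≤ r * (2 - r)⁻¹ :=
  norm_mul_le_of_le hw (norm_ringInverse_add_one_le hw hr)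

lemma norm_cayley_sub_cayley_le {a b : E} {r : ℝ} (ha : ‖a‖ ≤ r) (hb : ‖b‖ ≤ r) (hr : r < 1) :
    ‖cayley a - cayley b‖ ≤ 2 * (1 - r)⁻¹ ^ 2 * ‖a - b‖ := by
  rw [cayley_sub_cayley (isUnit_one_sub_of_norm_le ha hr) (isUnit_one_sub_of_norm_le hb hr)]
  have hqa := norm_ringInverse_one_sub_le ha hr
  have hqb := norm_ringInverse_one_sub_le hb hr
  calc ‖2 • ((1 - a)⁻¹ʳ * (a - b) * (1 - b)⁻¹ʳ)‖
      ≤ 2 * ‖(1 - a)⁻¹ʳ * (a - b) * (1 - b)⁻¹ʳ‖ := by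
        exact_mod_cast norm_nsmul_le (E := E) (n := 2)
    _ ≤ 2 * (‖(1 - a)⁻¹ʳ‖ * ‖a - b‖ * ‖(1 - b)⁻¹ʳ‖) := by gcongr; exact norm_mul₃_le
    _ ≤ 2 * ((1 - r)⁻¹ * ‖a - b‖ * (1 - r)⁻¹) := by gcongr
    _ = 2 * (1 - r)⁻¹ ^ 2 * ‖a - b‖ := by ring

end Norm

namespace LipschitzFiltration

variable {φ : ∀ n, B n ≃⋆ₐ[ℂ] Matrix (Fin n) (Fin n) A} (𝓕 : LipschitzFiltration A B φ) {n : ℕ}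

lemma matMem_mono {b : B n} {L L' : ℝ≥0} (hb : MatMem 𝓕.level (φ n b) L) (hL : L ≤ L') :
    MatMem 𝓕.level (φ n b) L' :=
  fun ξ η hξ hη => 𝓕.mono hL (hb ξ η hξ hη)

lemma matMem_algebraMap (c : ℂ) (L : ℝ≥0) :
    MatMem 𝓕.level (φ n (algebraMap ℂ (B n) c)) L := by
  rw [AlgHomClass.commutes]
  convert 𝓕.mat_scalar n L (Matrix.scalar (Fin n) c) using 1
  ext i j
  by_cases hij : i = j <;> simp [hij, Algebra.algebraMap_eq_smul_one]

lemma matMem_mul_of_norm_le {b₁ b₂ : B n} {L₁ L₂ C₁ C₂ L : ℝ≥0}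
    (h₁ : MatMem 𝓕.level (φ n b₁) L₁) (h₂ : MatMem 𝓕.level (φ n b₂) L₂)
    (hC₁ : ‖b₁‖ ≤ C₁) (hC₂ : ‖b₂‖ ≤ C₂) (hL : C₁ * L₂ + C₂ * L₁ ≤ L) :
    MatMem 𝓕.level (φ n (b₁ * b₂)) L :=
  𝓕.matMem_mono (𝓕.mat_mul n L₁ L₂ b₁ b₂ h₁ h₂) <| le_trans (by gcongr <;> assumption) hL

lemma matMem_smul_of_norm_le_one {b : B n} {L : ℝ≥0} {c : ℂ} (hb : MatMem 𝓕.level (φ n b) L)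
    (hc : ‖c‖ ≤ 1) : MatMem 𝓕.level (φ n (c • b)) L :=
  𝓕.matMem_mono (𝓕.mat_smul n L c b hb) <| mul_le_of_le_one_left' (by exact_mod_cast hc)

lemma matMem_add_algebraMap {b : B n} {L : ℝ≥0} (hb : MatMem 𝓕.level (φ n b) L) (c : ℂ) :
    MatMem 𝓕.level (φ n (b + algebraMap ℂ (B n) c)) L := by
  simpa using 𝓕.mat_add n L 0 _ _ hb (𝓕.matMem_algebraMap c 0)

lemma matMem_ringInverse_sub_algebraMap {b : B n} {L : ℝ≥0} (hb : MatMem 𝓕.level (φ n b) L)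
    (c : ℂ) :
    MatMem 𝓕.level (φ n (b - algebraMap ℂ (B n) c)⁻¹ʳ)
      (‖(b - algebraMap ℂ (B n) c)⁻¹ʳ‖₊ ^ 2 * L) := by
  by_cases h : IsUnit (b - algebraMap ℂ (B n) c)
  · simpa [Ring.inverse_of_isUnit h] using 𝓕.mat_inv n L b c h hb
  · simpa [Ring.inverse_non_unit _ h] using 𝓕.matMem_algebraMap (n := n) 0 0

lemma matMem_ringInverse_one_sub {a : B n} {L Q : ℝ≥0} (ha : MatMem 𝓕.level (φ n a) L)
    (hQ : ‖(1 - a)⁻¹ʳ‖ ≤ Q) : MatMem 𝓕.level (φ n (1 - a)⁻¹ʳ) (Q ^ 2 * L) := by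
  have h := 𝓕.matMem_ringInverse_sub_algebraMap (𝓕.matMem_smul_of_norm_le_one ha
    (c := -1) (by simp)) (-1)
  rw [show (-1 : ℂ) • a - algebraMap ℂ (B n) (-1) = 1 - a by simp [sub_eq_add_neg, add_comm]] at h
  exact 𝓕.matMem_mono h (by gcongr; exact_mod_cast hQ)

lemma matMem_ringInverse_add_one {w : B n} {L Q : ℝ≥0} (hw : MatMem 𝓕.level (φ n w) L)
    (hQ : ‖(w + 1)⁻¹ʳ‖ ≤ Q) : MatMem 𝓕.level (φ n (w + 1)⁻¹ʳ) (Q ^ 2 * L) := by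
  have h := 𝓕.matMem_ringInverse_sub_algebraMap hw (-1)
  rw [map_neg, map_one, sub_neg_eq_add] at h
  exact 𝓕.matMem_mono h (by gcongr; exact_mod_cast hQ)

lemma matMem_cayley {a : B n} {M P Q : ℝ≥0} (ha : MatMem 𝓕.level (φ n a) M)
    (hP : ‖1 + a‖ ≤ P) (hQ : ‖(1 - a)⁻¹ʳ‖ ≤ Q) :
    MatMem 𝓕.level (φ n (cayley a)) ((P * Q ^ 2 + Q) * M) := by
  have h₁ : MatMem 𝓕.level (φ n (1 + a)) M := by
    simpa [add_comm] using 𝓕.matMem_add_algebraMap ha 1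
  exact 𝓕.matMem_mul_of_norm_le h₁ (𝓕.matMem_ringInverse_one_sub ha hQ) hP hQ (le_of_eq (by ring))

lemma matMem_invCayley {w : B n} {M P Q : ℝ≥0} (hw : MatMem 𝓕.level (φ n w) M)
    (hP : ‖w - 1‖ ≤ P) (hQ : ‖(w + 1)⁻¹ʳ‖ ≤ Q) :
    MatMem 𝓕.level (φ n (invCayley w)) ((P * Q ^ 2 + Q) * M) := by
  have h₁ : MatMem 𝓕.level (φ n (w - 1)) M := by
    simpa [← sub_eq_add_neg] using 𝓕.matMem_add_algebraMap hw (-1)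
  exact 𝓕.matMem_mul_of_norm_le h₁ (𝓕.matMem_ringInverse_add_one hw hQ) hP hQ (le_of_eq (by ring))

theorem exists_lipschitz_unitary_path {W : B n} {M : ℝ≥0} (hW : W ∈ unitary (B n))
    (hWM : MatMem 𝓕.level (φ n W) M) (hW1 : ‖W - 1‖ ≤ 1 / 6) :
    ∃ h : ℝ → B n, h 0 = 1 ∧ h 1 = W ∧
      (∀ t ∈ Set.Icc (0 : ℝ) 1, h t ∈ unitary (B n) ∧ MatMem 𝓕.level (φ n (h t)) (3 / 2 * M)) ∧
      ∀ t ∈ Set.Icc (0 : ℝ) 1, ∀ s ∈ Set.Icc (0 : ℝ) 1, ‖h t - h s‖ ≤ |t - s| := by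
  have hW1' : IsUnit (W + 1) := isUnit_add_one_of_norm_sub_one_le hW1 (by norm_num)
  have hk : ‖(W + 1)⁻¹ʳ‖ ≤ (6 / 11 : ℝ≥0) :=
    (norm_ringInverse_add_one_le hW1 (by norm_num)).trans_eq (by norm_num)
  set y := invCayley W
  have hy : ‖y‖ ≤ 1 / 11 := (norm_invCayley_le hW1 (by norm_num)).trans_eq (by norm_num)
  have hyM : MatMem 𝓕.level (φ n y) (72 / 121 * M) := by
    convert 𝓕.matMem_invCayley hWM (P := 1 / 6) (by simpa using hW1) hk using 2
    norm_num
  have hz : ∀ t ∈ Set.Icc (0 : ℝ) 1, ‖(t : ℂ) • y‖ ≤ 1 / 11 := fun t ht => by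
    rw [norm_smul, Complex.norm_real, Real.norm_of_nonneg ht.1]
    nlinarith [ht.2, norm_nonneg y]
  refine ⟨fun t => cayley ((t : ℂ) • y), by simp, ?_, fun t ht => ⟨?_, ?_⟩, fun t ht s hs => ?_⟩
  · simpa using cayley_invCayley hW1'
      (by simpa using isUnit_one_sub_of_norm_le (hz 1 (by simp)) (by norm_num))
  · refine cayley_mem_unitary ?_ (isUnit_one_sub_of_norm_le (hz t ht) (by norm_num))
    rw [star_smul, star_invCayley hW hW1', Complex.star_def, Complex.conj_ofReal, smul_neg]
  · have h1z : ‖1 + (t : ℂ) • y‖ ≤ (12 / 11 : ℝ≥0) :=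
      (norm_add_le _ _).trans (by push_cast; linarith [CStarRing.norm_one_le (E := B n), hz t ht])
    have hq : ‖(1 - (t : ℂ) • y)⁻¹ʳ‖ ≤ (11 / 10 : ℝ≥0) :=
      (norm_ringInverse_one_sub_le (hz t ht) (by norm_num)).trans_eq (by norm_num)
    have hzM := 𝓕.matMem_smul_of_norm_le_one hyM (c := t) (by simpa [abs_of_nonneg ht.1] using ht.2)
    refine 𝓕.matMem_mono (𝓕.matMem_cayley hzM h1z hq) ?_
    rw [← mul_assoc]
    gcongr
    rw [← NNReal.coe_le_coe]
    norm_num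
  · calc ‖cayley ((t : ℂ) • y) - cayley ((s : ℂ) • y)‖
        ≤ 2 * (1 - 1 / 11)⁻¹ ^ 2 * ‖(t : ℂ) • y - (s : ℂ) • y‖ :=
          norm_cayley_sub_cayley_le (hz t ht) (hz s hs) (by norm_num)
      _ = 2 * (1 - 1 / 11)⁻¹ ^ 2 * (|t - s| * ‖y‖) := by
          rw [← sub_smul, norm_smul, ← Complex.ofReal_sub, Complex.norm_real, Real.norm_eq_abs]
      _ ≤ |t - s| := by nlinarith [abs_nonneg (t - s), norm_nonneg y]

end LipschitzFiltration

/-- unitaries at level `L` at distance at most `1/6`: there is a 1-Lipschitz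
path of unitaries at level `3L` from `1` to `v u*`; consequently `t ↦ h(t)·u` is a
1-Lipschitz path of unitaries at level `4L` from `u` to `v`. -/
theorem stmt8 (φ : ∀ n, B n ≃⋆ₐ[ℂ] Matrix (Fin n) (Fin n) A)
    (𝓕 : LipschitzFiltration A B φ) {n : ℕ} (L : ℝ≥0) (u v : B n)
    (hu : UMem φ 𝓕 L u) (hv : UMem φ 𝓕 L v) (huv : ‖u - v‖ ≤ 1 / 6) :
    ∃ h : ℝ → B n,
      h 0 = 1 ∧ h 1 = v * star u ∧
      (∀ t ∈ Set.Icc (0 : ℝ) 1, UMem φ 𝓕 (3 * L) (h t)) ∧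
      (∀ t ∈ Set.Icc (0 : ℝ) 1, ∀ s ∈ Set.Icc (0 : ℝ) 1, ‖h t - h s‖ ≤ |t - s|) ∧
      h 0 * u = u ∧ h 1 * u = v ∧
      (∀ t ∈ Set.Icc (0 : ℝ) 1, UMem φ 𝓕 (4 * L) (h t * u)) ∧
      (∀ t ∈ Set.Icc (0 : ℝ) 1, ∀ s ∈ Set.Icc (0 : ℝ) 1, ‖h t * u - h s * u‖ ≤ |t - s|) := by
  obtain ⟨huM, huU⟩ := hu
  obtain ⟨hvM, hvU⟩ := hv
  have hnorm : ∀ w ∈ unitary (B n), ‖w‖ ≤ ((1 : ℝ≥0) : ℝ) := fun w hw => by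
    simpa using norm_le_one_of_mem_unitary hw
  have hWM : MatMem 𝓕.level (φ n (v * star u)) (2 * L) :=
    𝓕.matMem_mul_of_norm_le hvM (𝓕.mat_star n L u huM) (hnorm v hvU)
      (hnorm _ (Unitary.star_mem huU)) (le_of_eq (by ring))
  have hW1 : ‖v * star u - 1‖ ≤ 1 / 6 := by
    rw [← Unitary.mul_star_self_of_mem huU, ← sub_mul,
      CStarRing.norm_mul_mem_unitary _ (Unitary.star_mem huU), norm_sub_rev]
    exact huv
  obtain ⟨h, h0, h1, hmem, hlip⟩ :=
    𝓕.exists_lipschitz_unitary_path (mul_mem hvU (Unitary.star_mem huU)) hWM hW1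
  have hmem3 : ∀ t ∈ Set.Icc (0 : ℝ) 1, UMem φ 𝓕 (3 * L) (h t) := fun t ht =>
    ⟨𝓕.matMem_mono (hmem t ht).2 (by rw [← mul_assoc]; norm_num), (hmem t ht).1⟩
  refine ⟨h, h0, h1, hmem3, hlip, by rw [h0, one_mul],
    by rw [h1, mul_assoc, Unitary.star_mul_self_of_mem huU, mul_one],
    fun t ht => ⟨?_, mul_mem (hmem t ht).1 huU⟩, fun t ht s hs => ?_⟩
  · exact 𝓕.matMem_mul_of_norm_le (hmem3 t ht).1 huM (hnorm _ (hmem t ht).1) (hnorm u huU)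
      (le_of_eq (by ring))
  · rw [← sub_mul, CStarRing.norm_mul_mem_unitary _ huU]
    exact hlip t ht s hs
end

section
/- Let {M¹_L} →(ξ¹) {M²_L} →(ξ²) {M³_L} →(ξ³) {M⁴_L} be a sequence of controlled homomorphisms between inductive systems over ℝ≥0 that is asymptotically exact at {M²_L} and at {M³_L}. (1) If there exists a controlled homomorphism s : {M³_L} → {M²_L} with ξ²∘s controlled equivalent to the identity, then ξ³ is controlled equivalent to the zero homomorphism. (2) If there exists a controlled homomorphism s : {M³_L} → {M²_L} with s∘ξ² controlled equivalent to the identity, then ξ¹ is controlled equivalent to the zero homomorphism. -/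
open scoped NNReal
open Filter

/-- An inductive system of abelian groups over `ℝ≥0`. -/
structure IndSys where
  M : ℝ≥0 → Type*
  inst : ∀ L, AddCommGroup (M L)
  map : ∀ {L L' : ℝ≥0}, L ≤ L' → (M L →+ M L')
  map_refl : ∀ (L : ℝ≥0) (x : M L), map (le_refl L) x = x
  map_comp : ∀ {L L' L'' : ℝ≥0} (h : L ≤ L') (h' : L' ≤ L'') (x : M L),
    map h' (map h x) = map (h.trans h') x

attribute [instance] IndSys.inst

/-- A control function: non-decreasing and tending to infinity. -/
def IsControl (F : ℝ≥0 → ℝ≥0) : Prop := Monotone F ∧ Tendsto F atTop atTop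

/-- A controlled homomorphism between inductive systems, with control function `F`. -/
structure CtrlHom (M N : IndSys) (F : ℝ≥0 → ℝ≥0) where
  ctrl : IsControl F
  f : ∀ L, M.M L →+ N.M (F L)
  compat : ∀ {L L' : ℝ≥0} (h : L ≤ L') (x : M.M L),
    N.map (ctrl.1 h) (f L x) = f L' (M.map h x)

/-- The identity controlled homomorphism, with control function `L ↦ L`. -/
def CtrlHom.id (M : IndSys) : CtrlHom M M (fun L => L) where
  ctrl := ⟨monotone_id, tendsto_id⟩
  f L := AddMonoidHom.id _
  compat _ _ := rfl

/-- The zero controlled homomorphism, with control function `L ↦ L`. -/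
def CtrlHom.zero (M N : IndSys) : CtrlHom M N (fun L => L) where
  ctrl := ⟨monotone_id, tendsto_id⟩
  f _ := 0
  compat _ _ := by simp

/-- Composition of controlled homomorphisms: `(ξ ∘ η)_L = ξ_{G(L)} ∘ η_L`, control `F ∘ G`. -/
def CtrlHom.comp {M N P : IndSys} {F G : ℝ≥0 → ℝ≥0}
    (ξ : CtrlHom N P F) (η : CtrlHom M N G) : CtrlHom M P (fun L => F (G L)) where
  ctrl := ⟨ξ.ctrl.1.comp η.ctrl.1, ξ.ctrl.2.comp η.ctrl.2⟩
  f L := (ξ.f (G L)).comp (η.f L)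
  compat h x := by
    simp only [AddMonoidHom.comp_apply]
    rw [ξ.compat (η.ctrl.1 h), η.compat h]

/-- `ξ` is controlled equivalent to `η` (for some control function `H ≥ F, G`). -/
def CtrlEquiv {M N : IndSys} {F G : ℝ≥0 → ℝ≥0} (ξ : CtrlHom M N F) (η : CtrlHom M N G) :
    Prop :=
  ∃ H : ℝ≥0 → ℝ≥0, IsControl H ∧
    ∃ (hF : ∀ L, F L ≤ H L) (hG : ∀ L, G L ≤ H L),
      ∀ (L : ℝ≥0) (x : M.M L), N.map (hF L) (ξ.f L x) = N.map (hG L) (η.f L x)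

/-- `ξ` is controlled equivalent to the zero homomorphism. -/
def CtrlEquivZero {M N : IndSys} {F : ℝ≥0 → ℝ≥0} (ξ : CtrlHom M N F) : Prop :=
  CtrlEquiv ξ (CtrlHom.zero M N)

/-- `ξ` is controlled equivalent to the identity homomorphism. -/
def CtrlEquivId {M : IndSys} {F : ℝ≥0 → ℝ≥0} (ξ : CtrlHom M M F) : Prop :=
  CtrlEquiv ξ (CtrlHom.id M)

/-- The sequence `M →(ξ) N →(η) P` is asymptotically exact at `N` with control functions
`F₁, F₂`. -/
def AsympExactAt {M N P : IndSys} {F G : ℝ≥0 → ℝ≥0}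
    (ξ : CtrlHom M N F) (η : CtrlHom N P G) (F₁ F₂ : ℝ≥0 → ℝ≥0) : Prop :=
  (IsControl F₁ ∧
    ∃ (h₁ : ∀ L, G (F L) ≤ F₁ L) (_h₂ : ∀ L, L ≤ F₁ L),
      ∀ (L : ℝ≥0) (x : M.M L), P.map (h₁ L) (η.f (F L) (ξ.f L x)) = 0) ∧
  (IsControl F₂ ∧
    ∃ hle : ∀ L, L ≤ F (F₂ L),
      ∀ (L : ℝ≥0) (m' : N.M L), η.f L m' = 0 →
        ∃ m : M.M (F₂ L), ξ.f (F₂ L) m = N.map (hle L) m')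

/-- An inductive system is uniformly controlled with uniform control pair `(L₀, F)`. -/
def UnifCtrlPair (M : IndSys) (L₀ : ℝ≥0) (F : ℝ≥0 → ℝ≥0) : Prop :=
  IsControl F ∧
  ∃ hle : ∀ L, L ≤ F L,
    (∀ L : ℝ≥0, L₀ ≤ L → ∀ (L' : ℝ≥0) (x : M.M L'),
      ∃ (y : M.M L) (L'' : ℝ≥0) (h : L ≤ L'') (h' : L' ≤ L''), M.map h y = M.map h' x) ∧
    (∀ (L : ℝ≥0) (x : M.M L), (∃ (L' : ℝ≥0) (h : L ≤ L'), M.map h x = 0) →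
      M.map (hle L) x = 0)

/-- An inductive system is uniformly controlled. -/
def UnifCtrl (M : IndSys) : Prop := ∃ (L₀ : ℝ≥0) (F : ℝ≥0 → ℝ≥0), UnifCtrlPair M L₀ F

/-!
Controlled equivalence is an equivalence relation compatible with composition, and the composite
of consecutive maps of an asymptotically exact sequence is controlled equivalent to zero. So the
usual algebra of a split map goes through: `ξ₃ ∼ ξ₃ ∘ (ξ₂ ∘ s) = (ξ₃ ∘ ξ₂) ∘ s ∼ 0 ∘ s ∼ 0` and
`ξ₁ ∼ (s ∘ ξ₂) ∘ ξ₁ = s ∘ (ξ₂ ∘ ξ₁) ∼ s ∘ 0 ∼ 0`.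
-/

theorem IsControl.comp {F G : ℝ≥0 → ℝ≥0} (hF : IsControl F) (hG : IsControl G) :
    IsControl fun L => F (G L) :=
  ⟨hF.1.comp hG.1, hF.2.comp hG.2⟩

theorem IsControl.max {F G : ℝ≥0 → ℝ≥0} (hF : IsControl F) (hG : Monotone G) :
    IsControl fun L => max (F L) (G L) :=
  ⟨fun _ _ h => max_le_max (hF.1 h) (hG h), tendsto_atTop_mono (fun _ => le_max_left _ _) hF.2⟩

infix:50 " ∼ᶜ " => CtrlEquiv

namespace CtrlEquiv

variable {M N P Q : IndSys} {F G K : ℝ≥0 → ℝ≥0}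

theorem symm {ξ : CtrlHom M N F} {η : CtrlHom M N G} (h : ξ ∼ᶜ η) : η ∼ᶜ ξ := by
  obtain ⟨H, hH, hF, hG, heq⟩ := h
  exact ⟨H, hH, hG, hF, fun L x => (heq L x).symm⟩

theorem trans {ξ : CtrlHom M N F} {η : CtrlHom M N G} {ζ : CtrlHom M N K}
    (h₁ : ξ ∼ᶜ η) (h₂ : η ∼ᶜ ζ) : ξ ∼ᶜ ζ := by
  obtain ⟨H, hH, hF, hG, heq₁⟩ := h₁
  obtain ⟨H', hH', hG', hK, heq₂⟩ := h₂
  refine ⟨fun L => max (H L) (H' L), hH.max hH'.1, fun L => (hF L).trans (le_max_left _ _),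
    fun L => (hK L).trans (le_max_right _ _), fun L x => ?_⟩
  calc N.map _ (ξ.f L x)
      = N.map (le_max_left _ _) (N.map (hF L) (ξ.f L x)) := (N.map_comp _ _ _).symm
    _ = N.map (le_max_left _ _) (N.map (hG L) (η.f L x)) := by rw [heq₁]
    _ = N.map (le_max_right _ _) (N.map (hG' L) (η.f L x)) := by rw [N.map_comp, N.map_comp]
    _ = N.map (le_max_right _ _) (N.map (hK L) (ζ.f L x)) := by rw [heq₂]
    _ = N.map _ (ζ.f L x) := N.map_comp _ _ _

instance : @Trans (CtrlHom M N F) (CtrlHom M N G) (CtrlHom M N K) CtrlEquiv CtrlEquiv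
    CtrlEquiv :=
  ⟨trans⟩

theorem comp_left (ξ : CtrlHom N P F) {η : CtrlHom M N G} {η' : CtrlHom M N K}
    (h : η ∼ᶜ η') : ξ.comp η ∼ᶜ ξ.comp η' := by
  obtain ⟨H, hH, hG, hK, heq⟩ := h
  refine ⟨fun L => F (H L), ξ.ctrl.comp hH, fun L => ξ.ctrl.1 (hG L),
    fun L => ξ.ctrl.1 (hK L), fun L x => ?_⟩
  simp only [CtrlHom.comp, AddMonoidHom.comp_apply]
  rw [ξ.compat (hG L), ξ.compat (hK L), heq]

theorem comp_right {ξ : CtrlHom N P F} {ξ' : CtrlHom N P G} (h : ξ ∼ᶜ ξ')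
    (s : CtrlHom M N K) : ξ.comp s ∼ᶜ ξ'.comp s := by
  obtain ⟨H, hH, hF, hG, heq⟩ := h
  exact ⟨fun L => H (K L), hH.comp s.ctrl, fun L => hF (K L), fun L => hG (K L),
    fun L x => heq (K L) (s.f L x)⟩

theorem comp_assoc (ξ : CtrlHom P Q F) (η : CtrlHom N P G) (s : CtrlHom M N K) :
    ξ.comp (η.comp s) ∼ᶜ (ξ.comp η).comp s :=
  ⟨_, (ξ.ctrl.comp η.ctrl).comp s.ctrl, fun _ => le_rfl, fun _ => le_rfl, fun _ _ => rfl⟩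

theorem comp_id (ξ : CtrlHom M N F) : ξ.comp (CtrlHom.id M) ∼ᶜ ξ :=
  ⟨F, ξ.ctrl, fun _ => le_rfl, fun _ => le_rfl, fun _ _ => rfl⟩

theorem id_comp (ξ : CtrlHom M N F) : (CtrlHom.id N).comp ξ ∼ᶜ ξ :=
  ⟨F, ξ.ctrl, fun _ => le_rfl, fun _ => le_rfl, fun _ _ => rfl⟩

theorem zero_comp (s : CtrlHom M N F) : (CtrlHom.zero N P).comp s ∼ᶜ CtrlHom.zero M P :=
  ⟨fun L => max (F L) L, s.ctrl.max monotone_id, fun _ => le_max_left _ _,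
    fun _ => le_max_right _ _, fun _ _ => by simp [CtrlHom.comp, CtrlHom.zero]⟩

theorem comp_zero (ξ : CtrlHom N P F) : ξ.comp (CtrlHom.zero M N) ∼ᶜ CtrlHom.zero M P :=
  ⟨fun L => max (F L) L, ξ.ctrl.max monotone_id, fun _ => le_max_left _ _,
    fun _ => le_max_right _ _, fun _ _ => by simp [CtrlHom.comp, CtrlHom.zero]⟩

end CtrlEquiv

theorem AsympExactAt.comp_ctrlEquivZero {M N P : IndSys} {F G E E' : ℝ≥0 → ℝ≥0}
    {ξ : CtrlHom M N F} {η : CtrlHom N P G} (h : AsympExactAt ξ η E E') :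
    η.comp ξ ∼ᶜ CtrlHom.zero M P := by
  obtain ⟨⟨hE, hle, hid, hzero⟩, -⟩ := h
  exact ⟨E, hE, hle, hid, fun L x => by simp [CtrlHom.comp, CtrlHom.zero, hzero]⟩

/-- if the middle map of an asymptotically exact sequence admits a controlled
one-sided inverse, then the adjacent map is controlled equivalent to zero. -/
theorem stmt15 (M₁ M₂ M₃ M₄ : IndSys) (F₁ F₂ F₃ : ℝ≥0 → ℝ≥0)
    (ξ₁ : CtrlHom M₁ M₂ F₁) (ξ₂ : CtrlHom M₂ M₃ F₂) (ξ₃ : CtrlHom M₃ M₄ F₃)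
    (hex₂ : ∃ E E' : ℝ≥0 → ℝ≥0, AsympExactAt ξ₁ ξ₂ E E')
    (hex₃ : ∃ E E' : ℝ≥0 → ℝ≥0, AsympExactAt ξ₂ ξ₃ E E') :
    ((∃ (Fs : ℝ≥0 → ℝ≥0) (s : CtrlHom M₃ M₂ Fs), CtrlEquivId (ξ₂.comp s)) →
        CtrlEquivZero ξ₃) ∧
    ((∃ (Fs : ℝ≥0 → ℝ≥0) (s : CtrlHom M₃ M₂ Fs), CtrlEquivId (s.comp ξ₂)) →
        CtrlEquivZero ξ₁) := by
  obtain ⟨_, _, hex₂⟩ := hex₂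
  obtain ⟨_, _, hex₃⟩ := hex₃
  constructor
  · rintro ⟨_, s, hs⟩
    calc ξ₃ ∼ᶜ ξ₃.comp (CtrlHom.id M₃) := (CtrlEquiv.comp_id ξ₃).symm
      _ ∼ᶜ ξ₃.comp (ξ₂.comp s) := (CtrlEquiv.symm hs).comp_left ξ₃
      _ ∼ᶜ (ξ₃.comp ξ₂).comp s := CtrlEquiv.comp_assoc ξ₃ ξ₂ s
      _ ∼ᶜ (CtrlHom.zero M₂ M₄).comp s := hex₃.comp_ctrlEquivZero.comp_right s
      _ ∼ᶜ CtrlHom.zero M₃ M₄ := CtrlEquiv.zero_comp s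
  · rintro ⟨_, s, hs⟩
    calc ξ₁ ∼ᶜ (CtrlHom.id M₂).comp ξ₁ := (CtrlEquiv.id_comp ξ₁).symm
      _ ∼ᶜ (s.comp ξ₂).comp ξ₁ := (CtrlEquiv.symm hs).comp_right ξ₁
      _ ∼ᶜ s.comp (ξ₂.comp ξ₁) := (CtrlEquiv.comp_assoc s ξ₂ ξ₁).symm
      _ ∼ᶜ s.comp (CtrlHom.zero M₁ M₃) := hex₂.comp_ctrlEquivZero.comp_left s
      _ ∼ᶜ CtrlHom.zero M₁ M₂ := CtrlEquiv.comp_zero s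
end
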